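/- Let p ≥ 2, let n be an even positive integer, and let x, y ∈ V_{p,n}^A. Put a = T_{A→R}(x) and b = T_{A→R}(y). Then x ~^A y if and only if a ~ b. -/

import Mathlib

open scoped Classical

/-- Tuples over `ZMod p` of arbitrary length (`U_p` lives among these). -/
abbrev DehnTuple (p : ℕ) := Σ n : ℕ, Fin n → ZMod p

/-- (Op1): cyclic shift `(a_1,…,a_n) → (a_2,…,a_n,a_1)`. -/
def dOp1 {p n : ℕ} (hn : 0 < n) (a : Fin n → ZMod p) : Fin n → ZMod p :=
  fun i => a ⟨(i.1 + 1) % n, Nat.mod_lt _ hn⟩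

/-- (Op2): `(a_1,…,a_n) → (x, a_2+(-1)^2(a_1-x), …, a_n+(-1)^n(a_1-x))`. -/
def dOp2 {p n : ℕ} (hn : 0 < n) (x : ZMod p) (a : Fin n → ZMod p) : Fin n → ZMod p :=
  fun i => a i + (-1 : ZMod p) ^ (i.1 + 1) * (a ⟨0, hn⟩ - x)

/-- (Op3): `(a_1,…,a_n) → (x, a_1-a_2+x, …, a_1-a_n+x)`. -/
def dOp3 {p n : ℕ} (hn : 0 < n) (x : ZMod p) (a : Fin n → ZMod p) : Fin n → ZMod p :=
  fun i => a ⟨0, hn⟩ - a i + x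

/-- (Op4): `(a_1,…,a_n) → (a_1, -a_1+a_2+a_3, a_3, …, a_n)` (needs `n > 2`). -/
def dOp4 {p n : ℕ} (hn : 2 < n) (a : Fin n → ZMod p) : Fin n → ZMod p :=
  fun i => if i.1 = 1 then -a ⟨0, by omega⟩ + a ⟨1, by omega⟩ + a ⟨2, hn⟩ else a i

/-- A single transformation (Op1)–(Op4) on tuples in `U_p`
(tuples of even positive length). -/
inductive DehnStep (p : ℕ) : DehnTuple p → DehnTuple p → Prop
  | op1 {n : ℕ} (hn : 0 < n) (he : Even n) (a : Fin n → ZMod p) :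
      DehnStep p ⟨n, a⟩ ⟨n, dOp1 hn a⟩
  | op2 {n : ℕ} (hn : 0 < n) (he : Even n) (x : ZMod p) (a : Fin n → ZMod p) :
      DehnStep p ⟨n, a⟩ ⟨n, dOp2 hn x a⟩
  | op3 {n : ℕ} (hn : 0 < n) (he : Even n) (x : ZMod p) (a : Fin n → ZMod p) :
      DehnStep p ⟨n, a⟩ ⟨n, dOp3 hn x a⟩
  | op4 {n : ℕ} (hn : 2 < n) (he : Even n) (a : Fin n → ZMod p) :
      DehnStep p ⟨n, a⟩ ⟨n, dOp4 hn a⟩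

/-- `a ~ b`: related by a finite sequence of the transformations (Op1)–(Op4). -/
def DehnEquiv (p : ℕ) : DehnTuple p → DehnTuple p → Prop :=
  Relation.ReflTransGen (DehnStep p)

/-- An `R`-palette for Dehn `p`-colorings: a set of tuples closed under the
operations (i)–(iv). -/
def IsRPalette (p : ℕ) (P : Set (DehnTuple p)) : Prop :=
  (∀ {n : ℕ} (hn : 0 < n) (a : Fin n → ZMod p),
      (⟨n, a⟩ : DehnTuple p) ∈ P → (⟨n, dOp1 hn a⟩ : DehnTuple p) ∈ P) ∧
  (∀ {n : ℕ} (hn : 0 < n) (x : ZMod p) (a : Fin n → ZMod p),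
      (⟨n, a⟩ : DehnTuple p) ∈ P → (⟨n, dOp2 hn x a⟩ : DehnTuple p) ∈ P) ∧
  (∀ {n : ℕ} (hn : 0 < n) (x : ZMod p) (a : Fin n → ZMod p),
      (⟨n, a⟩ : DehnTuple p) ∈ P → (⟨n, dOp3 hn x a⟩ : DehnTuple p) ∈ P) ∧
  (∀ {n : ℕ} (hn : 2 < n) (a : Fin n → ZMod p),
      (⟨n, a⟩ : DehnTuple p) ∈ P → (⟨n, dOp4 hn a⟩ : DehnTuple p) ∈ P)

/-- The alternating set `A_p`: tuples of even positive length of the form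
`(x, y, x, y, …, x, y)`. -/
def altSet (p : ℕ) : Set (DehnTuple p) :=
  {t | 0 < t.1 ∧ Even t.1 ∧
    ∃ x y : ZMod p, ∀ i : Fin t.1, t.2 i = if Even i.1 then x else y}

/-- The cyclic consecutive sums `a_i + a_{i+1}` of integer representatives. -/
def cycS {p n : ℕ} (hn : 0 < n) (a : Fin n → ZMod p) (i : Fin n) : ℕ :=
  (a i).val + (a ⟨(i.1 + 1) % n, Nat.mod_lt _ hn⟩).val

/-- `τ_p(a)`: the largest `k ∈ {1,…,p}` dividing `p` such that all cyclic
consecutive sums are congruent mod `k`. -/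
noncomputable def tauInv (p : ℕ) {n : ℕ} (hn : 0 < n) (a : Fin n → ZMod p) : ℕ :=
  sSup {k : ℕ | 0 < k ∧ k ∣ p ∧ ∀ i j : Fin n, cycS hn a i ≡ cycS hn a j [MOD k]}

/-- `ε_p(a)`: `0` if all cyclic consecutive sums are even, `1` if all are odd,
`∞` otherwise. -/
noncomputable def epsInv (p : ℕ) {n : ℕ} (hn : 0 < n) (a : Fin n → ZMod p) : WithTop ℕ :=
  if ∀ i, Even (cycS hn a i) then 0
  else if ∀ i, Odd (cycS hn a i) then 1
  else ⊤

/-- `μ_p(a) = E(a) - O(a)`. -/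
noncomputable def muInv (p : ℕ) {n : ℕ} (hn : 0 < n) (a : Fin n → ZMod p) : ℤ :=
  ((Finset.univ.filter fun i : Fin n => Even (cycS hn a i)).card : ℤ) -
  ((Finset.univ.filter fun i : Fin n => Odd (cycS hn a i)).card : ℤ)

/-- The reduced tuple `b ∈ (Z_{p/τ})^n` with `b_{2j-1} = (a_{2j-1}-a_1)/τ`,
`b_{2j} = (a_{2j}-a_2)/τ` (differences of integer representatives). -/
noncomputable def reducedTuple (p : ℕ) {n : ℕ} (hn1 : 1 < n) (τ : ℕ) (a : Fin n → ZMod p) :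
    Fin n → ZMod (p / τ) :=
  fun i =>
    (((((a i).val : ℤ) -
        (if Even i.1 then ((a ⟨0, by omega⟩).val : ℤ) else ((a ⟨1, hn1⟩).val : ℤ))) /
      (τ : ℤ) : ℤ) : ZMod (p / τ))

/-- `μ_{p,τ}(a)`: `|μ_{p/τ}(b)|` if `τ_p(a) = τ`, and `∞` otherwise. -/
noncomputable def muTauInv (p : ℕ) {n : ℕ} (hn1 : 1 < n) (τ : ℕ) (a : Fin n → ZMod p) :
    WithTop ℤ :=
  if tauInv p (by omega) a = τ then
    ((|muInv (p / τ) (by omega) (reducedTuple p hn1 τ a)| : ℤ) : WithTop ℤ)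
  else ⊤

/-- The entry at (0-indexed) position `k` of the canonical tuple
`(0, 0, τ, -τ, 2τ, -2τ, …)`. -/
def pairPat (p τ k : ℕ) : ZMod p :=
  if Even k then ((k / 2 : ℕ) : ZMod p) * (τ : ZMod p)
  else -(((k / 2 : ℕ) : ZMod p) * (τ : ZMod p))

/-- The alternating sum `Σ_{i=1}^n (-1)^i x_i` in `ZMod p`. -/
def altSum (p n : ℕ) (x : Fin n → ZMod p) : ZMod p :=
  ∑ i : Fin n, (-1 : ZMod p) ^ (i.1 + 1) * x i

/-- `T_{R→A}(a_1,…,a_n) = (a_1+a_2, a_2+a_3, …, a_{n-1}+a_n, a_n+a_1)`. -/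
def traMap (p : ℕ) {n : ℕ} (hn : 0 < n) (a : Fin n → ZMod p) : Fin n → ZMod p :=
  fun i => a i + a ⟨(i.1 + 1) % n, Nat.mod_lt _ hn⟩

/-- `T_{A→R}(x_1,…,x_n) = (0, c_2, …, c_n)`, `c_j = Σ_{i=1}^{j-1} (-1)^{i+(j-1)} x_i`. -/
def tarMap (p n : ℕ) (x : Fin n → ZMod p) : Fin n → ZMod p :=
  fun k => ∑ i : Fin n, if i.1 < k.1 then (-1 : ZMod p) ^ (i.1 + k.1 + 1) * x i else 0

/-- A single transformation (Op1)^A–(Op3)^A on arc-color tuples. -/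
inductive AStep (p n : ℕ) : (Fin n → ZMod p) → (Fin n → ZMod p) → Prop
  | op1 (hn : 0 < n) (x : Fin n → ZMod p) :
      AStep p n x (fun i => x ⟨(i.1 + 1) % n, Nat.mod_lt _ hn⟩)
  | op2 (c : ZMod p) (x : Fin n → ZMod p) :
      AStep p n x (fun i => 2 * c - x i)
  | op3 (hn : 1 < n) (x : Fin n → ZMod p) :
      AStep p n x (fun i =>
        if i.1 = 0 then x ⟨1, hn⟩
        else if i.1 = 1 then 2 * x ⟨1, hn⟩ - x ⟨0, by omega⟩
        else x i)

/-- `x ~^A y`: related by a finite sequence of (Op1)^A–(Op3)^A. -/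
def AEquiv (p n : ℕ) : (Fin n → ZMod p) → (Fin n → ZMod p) → Prop :=
  Relation.ReflTransGen (AStep p n)

/-- `τ_p^A(x)`: the largest `k ∈ {1,…,p}` dividing `p` with all entries
congruent mod `k`. -/
noncomputable def tauA (p n : ℕ) (x : Fin n → ZMod p) : ℕ :=
  sSup {k : ℕ | 0 < k ∧ k ∣ p ∧ ∀ i j : Fin n, (x i).val ≡ (x j).val [MOD k]}

/-!
`T_{R→A}` (`traMap`) is a left inverse of `T_{A→R}` on `V_{p,n}^A`, so it suffices to show
that for tuples `a, b` of even length, `a ~ b ↔ T_{R→A}(a) ~^A T_{R→A}(b)`. Under `T_{R→A}`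
the moves (Op1), (Op3), (Op4) become (Op1^A), (Op2^A), (Op3^A), while (Op2) leaves
`T_{R→A}(a)` unchanged. Conversely, `T_{R→A}(a)` determines `a` up to its first entry, which
(Op2) can set freely, so tuples with the same image are `~`-equivalent.
-/

section

variable {p n : ℕ}

lemma neg_one_pow_mod_of_even (he : Even n) (k : ℕ) :
    (-1 : ZMod p) ^ (k % n) = (-1 : ZMod p) ^ k := by
  rw [neg_one_pow_eq_pow_mod_two, Nat.mod_mod_of_dvd _ he.two_dvd, ← neg_one_pow_eq_pow_mod_two]

lemma traMap_dOp1 (hn : 0 < n) (a : Fin n → ZMod p) :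
    traMap p hn (dOp1 hn a) = fun i => traMap p hn a ⟨(i.1 + 1) % n, Nat.mod_lt _ hn⟩ :=
  rfl

lemma traMap_dOp2 (hn : 0 < n) (he : Even n) (c : ZMod p) (a : Fin n → ZMod p) :
    traMap p hn (dOp2 hn c a) = traMap p hn a := by
  funext i
  have hsign : (-1 : ZMod p) ^ ((i.1 + 1) % n + 1) = -(-1 : ZMod p) ^ (i.1 + 1) := by
    rw [pow_succ, neg_one_pow_mod_of_even he]; ring
  simp only [traMap, dOp2, hsign]
  ring

lemma traMap_dOp3 (hn : 0 < n) (c : ZMod p) (a : Fin n → ZMod p) :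
    traMap p hn (dOp3 hn c a) = fun i => 2 * (a ⟨0, hn⟩ + c) - traMap p hn a i := by
  funext i
  simp only [traMap, dOp3]
  ring

lemma traMap_dOp4 (hn : 0 < n) (hn2 : 2 < n) (a : Fin n → ZMod p) :
    traMap p hn (dOp4 hn2 a) = fun i =>
      if i.1 = 0 then traMap p hn a ⟨1, by omega⟩
      else if i.1 = 1 then 2 * traMap p hn a ⟨1, by omega⟩ - traMap p hn a ⟨0, hn⟩
      else traMap p hn a i := by
  funext ⟨i, hi⟩
  have h1 : 1 % n = 1 := Nat.mod_eq_of_lt (by omega)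
  have h2 : 2 % n = 2 := Nat.mod_eq_of_lt hn2
  simp only [traMap, dOp4]
  rcases i with _ | _ | i
  · simp only [h1, h2, zero_add, Nat.reduceAdd, ↓reduceIte, zero_ne_one]
    ring
  · simp only [h1, h2, zero_add, Nat.reduceAdd, ↓reduceIte, one_ne_zero, OfNat.ofNat_ne_one]
    ring
  · have hnext : (i + 2 + 1) % n ≠ 1 := by
      rcases Nat.lt_or_ge (i + 3) n with h | h
      · rw [Nat.mod_eq_of_lt h]; omega
      · rw [show i + 2 + 1 = n by omega, Nat.mod_self]; omega
    simp [hnext]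

lemma dOp2_apply_zero (hn : 0 < n) (c : ZMod p) (a : Fin n → ZMod p) :
    dOp2 hn c a ⟨0, hn⟩ = c := by
  simp only [dOp2]
  ring

lemma eq_of_traMap_eq (hn : 0 < n) {a b : Fin n → ZMod p}
    (h : traMap p hn a = traMap p hn b) (h0 : a ⟨0, hn⟩ = b ⟨0, hn⟩) : a = b := by
  suffices ∀ k (hk : k < n), a ⟨k, hk⟩ = b ⟨k, hk⟩ from funext fun i => this i.1 i.2
  intro k
  induction k with
  | zero => exact fun _ => h0
  | succ k ih =>
    intro hk
    have hstep := congrFun h ⟨k, by omega⟩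
    simp only [traMap, Nat.mod_eq_of_lt hk] at hstep
    linear_combination hstep - ih (by omega)

lemma dehnEquiv_of_traMap_eq (hn : 0 < n) (he : Even n) {a b : Fin n → ZMod p}
    (h : traMap p hn a = traMap p hn b) : DehnEquiv p ⟨n, a⟩ ⟨n, b⟩ := by
  have hb : dOp2 hn (b ⟨0, hn⟩) a = b :=
    eq_of_traMap_eq hn (by rw [traMap_dOp2 hn he, h]) (dOp2_apply_zero hn _ a)
  exact .single (hb ▸ DehnStep.op2 hn he _ a)

lemma exists_aEquiv_traMap_of_dehnStep (hn : 0 < n) {a : Fin n → ZMod p} {t : DehnTuple p}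
    (h : DehnStep p ⟨n, a⟩ t) :
    ∃ b, t = ⟨n, b⟩ ∧ AEquiv p n (traMap p hn a) (traMap p hn b) := by
  cases h with
  | op1 => exact ⟨_, rfl, .single (by rw [traMap_dOp1 hn]; exact AStep.op1 hn _)⟩
  | op2 _ he c => exact ⟨_, rfl, traMap_dOp2 hn he c a ▸ .refl⟩
  | op3 _ _ c => exact ⟨_, rfl, .single (by rw [traMap_dOp3 hn]; exact AStep.op2 _ _)⟩
  | op4 hn2 => exact ⟨_, rfl, .single (by rw [traMap_dOp4 hn hn2]; exact AStep.op3 (by omega) _)⟩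

lemma aEquiv_traMap_of_dehnEquiv (hn : 0 < n) {a b : Fin n → ZMod p}
    (h : DehnEquiv p ⟨n, a⟩ ⟨n, b⟩) : AEquiv p n (traMap p hn a) (traMap p hn b) := by
  suffices ∀ t, DehnEquiv p ⟨n, a⟩ t →
      ∃ b, t = ⟨n, b⟩ ∧ AEquiv p n (traMap p hn a) (traMap p hn b) by
    obtain ⟨b', hb', hab'⟩ := this _ h
    obtain rfl := eq_of_heq (Sigma.mk.inj_iff.mp hb').2
    exact hab'
  intro t ht
  induction ht with
  | refl => exact ⟨a, rfl, .refl⟩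
  | tail _ hstep ih =>
    obtain ⟨b', rfl, hab'⟩ := ih
    obtain ⟨c, rfl, hbc⟩ := exists_aEquiv_traMap_of_dehnStep hn hstep
    exact ⟨c, rfl, hab'.trans hbc⟩

lemma exists_dehnEquiv_traMap_eq_of_aStep (hn : 0 < n) (he : Even n) {a z : Fin n → ZMod p}
    (h : AStep p n (traMap p hn a) z) :
    ∃ b, DehnEquiv p ⟨n, a⟩ ⟨n, b⟩ ∧ traMap p hn b = z := by
  cases h with
  | op1 => exact ⟨dOp1 hn a, .single (.op1 hn he a), traMap_dOp1 hn a⟩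
  | op2 c =>
    refine ⟨dOp3 hn (c - a ⟨0, hn⟩) a, .single (.op3 hn he _ a), ?_⟩
    funext i
    rw [traMap_dOp3]
    ring
  | op3 hn1 =>
    by_cases hn2 : 2 < n
    · exact ⟨dOp4 hn2 a, .single (.op4 hn2 he a), traMap_dOp4 hn hn2 a⟩
    · -- for `n = 2` the move (Op3^A) fixes `T_{R→A}(a) = (a_1 + a_2, a_2 + a_1)`
      obtain rfl : n = 2 := by omega
      refine ⟨a, .refl, funext fun i => ?_⟩
      fin_cases i <;>
        simp only [traMap, Fin.zero_eta, Fin.mk_one, Fin.isValue, zero_add, Nat.reduceAdd,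
          Nat.mod_succ, Nat.mod_self, one_ne_zero, ↓reduceIte] <;> ring

lemma dehnEquiv_of_aEquiv_traMap (hn : 0 < n) (he : Even n) {a b : Fin n → ZMod p}
    (h : AEquiv p n (traMap p hn a) (traMap p hn b)) : DehnEquiv p ⟨n, a⟩ ⟨n, b⟩ := by
  suffices ∀ z, AEquiv p n (traMap p hn a) z →
      ∃ b', DehnEquiv p ⟨n, a⟩ ⟨n, b'⟩ ∧ traMap p hn b' = z by
    obtain ⟨b', hab', hb'⟩ := this _ h
    exact hab'.trans (dehnEquiv_of_traMap_eq hn he hb')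
  intro z hz
  induction hz with
  | refl => exact ⟨a, .refl, rfl⟩
  | tail _ hstep ih =>
    obtain ⟨b', hab', rfl⟩ := ih
    obtain ⟨c, hbc, rfl⟩ := exists_dehnEquiv_traMap_eq_of_aStep hn he hstep
    exact ⟨c, hab'.trans hbc, rfl⟩

theorem dehnEquiv_iff_aEquiv_traMap (hn : 0 < n) (he : Even n) (a b : Fin n → ZMod p) :
    DehnEquiv p ⟨n, a⟩ ⟨n, b⟩ ↔ AEquiv p n (traMap p hn a) (traMap p hn b) :=
  ⟨aEquiv_traMap_of_dehnEquiv hn, dehnEquiv_of_aEquiv_traMap hn he⟩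

lemma tarMap_apply_zero (hn : 0 < n) (x : Fin n → ZMod p) : tarMap p n x ⟨0, hn⟩ = 0 := by
  simp [tarMap]

lemma tarMap_add_tarMap_succ {k : ℕ} (hk : k + 1 < n) (x : Fin n → ZMod p) :
    tarMap p n x ⟨k, by omega⟩ + tarMap p n x ⟨k + 1, hk⟩ = x ⟨k, by omega⟩ := by
  rw [tarMap, tarMap, ← Finset.sum_add_distrib, ← Fintype.sum_ite_eq' ⟨k, _⟩ x]
  refine Finset.sum_congr rfl fun ⟨i, hi⟩ _ => ?_
  simp only [Fin.mk.injEq]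
  rcases lt_trichotomy i k with h | rfl | h
  · rw [if_pos h, if_pos (by omega), if_neg h.ne, show i + (k + 1) + 1 = i + k + 1 + 1 by omega,
      pow_succ]
    ring
  · have hsign : (-1 : ZMod p) ^ (i + (i + 1) + 1) = 1 := Even.neg_one_pow ⟨i + 1, by omega⟩
    simp [hsign]
  · rw [if_neg (by omega), if_neg (by omega), if_neg h.ne', add_zero]

lemma tarMap_last (hn : 0 < n) (he : Even n) {x : Fin n → ZMod p} (hx : altSum p n x = 0) :
    tarMap p n x ⟨n - 1, by omega⟩ = x ⟨n - 1, by omega⟩ := by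
  rw [← add_zero (tarMap p n x _), ← hx, tarMap, altSum, ← Finset.sum_add_distrib,
    ← Fintype.sum_ite_eq' ⟨n - 1, _⟩ x]
  refine Finset.sum_congr rfl fun ⟨i, hi⟩ _ => ?_
  simp only [Fin.mk.injEq]
  by_cases h : i < n - 1
  · rw [if_pos h, if_neg h.ne, show i + (n - 1) + 1 = i + n by omega,
      pow_add, he.neg_one_pow, pow_succ]
    ring
  · obtain rfl : i = n - 1 := by omega
    have hsign : (-1 : ZMod p) ^ (n - 1 + 1) = 1 := by rw [Nat.sub_add_cancel hn]; exact he.neg_one_pow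
    simp [hsign]

theorem traMap_tarMap (hn : 0 < n) (he : Even n) {x : Fin n → ZMod p} (hx : altSum p n x = 0) :
    traMap p hn (tarMap p n x) = x := by
  funext ⟨k, hk⟩
  rcases Nat.lt_or_ge (k + 1) n with h | h
  · simp only [traMap, Nat.mod_eq_of_lt h]
    exact tarMap_add_tarMap_succ h x
  · obtain rfl : k = n - 1 := by omega
    simp only [traMap, Nat.sub_add_cancel hn, Nat.mod_self, tarMap_apply_zero, add_zero]
    exact tarMap_last hn he hx

end

theorem aEquiv_iff_dehnEquiv_general (p n : ℕ) (hn : 0 < n)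
    (hne : Even n) (x y : Fin n → ZMod p)
    (hx : altSum p n x = 0) (hy : altSum p n y = 0) :
    AEquiv p n x y ↔ DehnEquiv p ⟨n, tarMap p n x⟩ ⟨n, tarMap p n y⟩ := by
  rw [dehnEquiv_iff_aEquiv_traMap hn hne, traMap_tarMap hn hne hx, traMap_tarMap hn hne hy]

/-- for `x, y ∈ V_{p,n}^A` with `a = T_{A→R}(x)` and
`b = T_{A→R}(y)`, one has `x ~^A y ↔ a ~ b`. -/
theorem aEquiv_iff_dehnEquiv (p n : ℕ) (hp : 2 ≤ p) (hn : 0 < n)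
    (hne : Even n) (x y : Fin n → ZMod p)
    (hx : altSum p n x = 0) (hy : altSum p n y = 0) :
    AEquiv p n x y ↔ DehnEquiv p ⟨n, tarMap p n x⟩ ⟨n, tarMap p n y⟩ :=
  aEquiv_iff_dehnEquiv_general p n hn hne x y hx hy
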